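/- Let $I \subseteq K[x,y]$ be an ideal, let $\prec$ be a block order eliminating $x$, let $H$ be a minimal Gröbner basis of $I$ with respect to $\prec$ with $H \subseteq K[x,y]$, and let $h \in K[y]$ be the least common multiple of the leading coefficients of the elements of $H$ viewed in $K(y)[x]$. Then $I \cdot K(y)[x] \cap K[x,y] = (I : h^\infty)$, the saturation of $I$ by $h$. -/

import Mathlib

open MvPolynomial

/-- The saturation `(I : h^∞)` of an ideal `I` by an element `h`. -/
def satIdeal {R : Type*} [CommRing R] (I : Ideal R) (h : R) : Ideal R where
  carrier := {f | ∃ k : ℕ, h ^ k * f ∈ I}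
  zero_mem' := ⟨0, by simp⟩
  add_mem' := by
    rintro a b ⟨k, hk⟩ ⟨l, hl⟩
    refine ⟨k + l, ?_⟩
    have h1 := I.add_mem (I.mul_mem_left (h ^ l) hk) (I.mul_mem_left (h ^ k) hl)
    convert h1 using 1
    ring
  smul_mem' := by
    rintro c a ⟨k, hk⟩
    refine ⟨k, ?_⟩
    have h1 := I.mul_mem_left c hk
    convert h1 using 1
    simp [smul_eq_mul]
    ring

/-- `m` is the leading monomial of `f` with respect to the order `prec`. -/
def IsLeadingMonomial {σ R : Type*} [CommSemiring R] (prec : (σ →₀ ℕ) → (σ →₀ ℕ) → Prop)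
    (f : MvPolynomial σ R) (m : σ →₀ ℕ) : Prop :=
  m ∈ f.support ∧ ∀ m' ∈ f.support, m' = m ∨ prec m' m

/-- `G` is a (finite) Gröbner basis of the ideal `I` with respect to the order `prec`. -/
def IsGroebnerBasis {σ R : Type*} [CommSemiring R] (prec : (σ →₀ ℕ) → (σ →₀ ℕ) → Prop)
    (G : Set (MvPolynomial σ R)) (I : Ideal (MvPolynomial σ R)) : Prop :=
  G.Finite ∧ G ⊆ (I : Set (MvPolynomial σ R)) ∧
    ∀ f ∈ I, f ≠ 0 → ∀ m, IsLeadingMonomial prec f m →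
      ∃ g ∈ G, ∃ mg, IsLeadingMonomial prec g mg ∧ mg ≤ m

/-- A minimal Gröbner basis: no leading monomial of an element divides the leading monomial
of another element. -/
def IsMinimalGroebnerBasis {σ R : Type*} [CommSemiring R]
    (prec : (σ →₀ ℕ) → (σ →₀ ℕ) → Prop) (G : Set (MvPolynomial σ R))
    (I : Ideal (MvPolynomial σ R)) : Prop :=
  IsGroebnerBasis prec G I ∧ ∀ g ∈ G, g ≠ 0 ∧
    ∀ g' ∈ G, g' ≠ g → ∀ m m', IsLeadingMonomial prec g m →
      IsLeadingMonomial prec g' m' → ¬ m' ≤ m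

/-- A monomial order on exponent vectors. -/
def IsMonomialOrder {σ : Type*} (prec : (σ →₀ ℕ) → (σ →₀ ℕ) → Prop) : Prop :=
  (∀ a b, a = b ∨ prec a b ∨ prec b a) ∧
  (∀ a b c, prec a b → prec b c → prec a c) ∧
  (∀ a, ¬ prec a a) ∧
  (∀ a b : σ →₀ ℕ, a ≤ b → a ≠ b → prec a b) ∧
  (∀ a b c : σ →₀ ℕ, prec a b → prec (c + a) (c + b))

/-- The block order eliminating `x`, comparing `x`-parts first. -/
def blockOrder {σ τ : Type*} (prec1 : (σ →₀ ℕ) → (σ →₀ ℕ) → Prop)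
    (prec2 : (τ →₀ ℕ) → (τ →₀ ℕ) → Prop) (a b : (σ ⊕ τ) →₀ ℕ) : Prop :=
  prec1 (Finsupp.sumFinsuppAddEquivProdFinsupp a).1 (Finsupp.sumFinsuppAddEquivProdFinsupp b).1 ∨
    ((Finsupp.sumFinsuppAddEquivProdFinsupp a).1 = (Finsupp.sumFinsuppAddEquivProdFinsupp b).1 ∧
      prec2 (Finsupp.sumFinsuppAddEquivProdFinsupp a).2
        (Finsupp.sumFinsuppAddEquivProdFinsupp b).2)

/-- The canonical map `K[x,y] → K(y)[x]`. -/
noncomputable def toFracPoly (K σ τ : Type*) [Field K] :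
    MvPolynomial (σ ⊕ τ) K →+* MvPolynomial σ (FractionRing (MvPolynomial τ K)) :=
  (MvPolynomial.map
      (algebraMap (MvPolynomial τ K) (FractionRing (MvPolynomial τ K)))).comp
    (sumAlgEquiv K σ τ).toRingEquiv.toRingHom

/-- `c ∈ K[y]` is the leading coefficient of `g ∈ K[x,y]` viewed in `K(y)[x]` with respect to
the order `≺₁` on `x`-monomials: writing `g` as a polynomial in `x` with coefficients in
`K[y]`, it is the coefficient of the `≺₁`-leading `x`-monomial. -/
def IsLeadingCoeff {K σ τ : Type*} [Field K] (prec1 : (σ →₀ ℕ) → (σ →₀ ℕ) → Prop)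
    (g : MvPolynomial (σ ⊕ τ) K) (c : MvPolynomial τ K) : Prop :=
  ∃ m, IsLeadingMonomial prec1 (sumAlgEquiv K σ τ g) m ∧ (sumAlgEquiv K σ τ g).coeff m = c


/-!
Clearing denominators, `f` lies in `I·K(y)[x] ∩ K[x,y]` iff `d f ∈ I` for some nonzero
`d ∈ K[y]`; as `h ≠ 0`, this gives `⊇`. For `⊆`, induct on the `x`-leading monomial `x^m` of
`f`, which is well founded because there are finitely many `x`-variables. The block-leading
monomial of `d f` has `x`-part `x^m` and is divisible by the leading monomial of some `g ∈ H`, so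
the `x`-leading monomial `x^{m_g}` of `g` divides `x^m`. With `c` the leading coefficient of `g`
and `a` the coefficient of `x^m` in `f`, the element `c f - a x^{m - m_g} g` is still in the
contraction and has smaller `x`-leading monomial; as `c ∣ h`, this puts `h f`, hence `f`, in the
saturation.
-/

section LeadingMonomial

variable {σ R : Type*} {prec : (σ →₀ ℕ) → (σ →₀ ℕ) → Prop}

theorem Finset.exists_forall_eq_or_rel {α : Type*} {r : α → α → Prop}
    (htot : ∀ a b, a = b ∨ r a b ∨ r b a) (htrans : ∀ a b c, r a b → r b c → r a c)
    {s : Finset α} (hs : s.Nonempty) : ∃ m ∈ s, ∀ a ∈ s, a = m ∨ r a m := by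
  induction hs using Finset.Nonempty.cons_induction with
  | singleton a => exact ⟨a, by simp, by simp⟩
  | cons a s ha hs ih =>
    obtain ⟨m, hm, hmax⟩ := ih
    rcases htot m a with rfl | hma | ham
    · exact ⟨m, Finset.mem_cons_self _ _, by simpa using hmax⟩
    · refine ⟨a, Finset.mem_cons_self _ _, ?_⟩
      simp only [Finset.forall_mem_cons, true_or, true_and]
      intro b hb
      rcases hmax b hb with rfl | hbm
      exacts [.inr hma, .inr (htrans _ _ _ hbm hma)]
    · exact ⟨m, Finset.mem_cons_of_mem hm, by simpa [ham] using hmax⟩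

theorem exists_isLeadingMonomial [CommSemiring R]
    (htot : ∀ a b, a = b ∨ prec a b ∨ prec b a) (htrans : ∀ a b c, prec a b → prec b c → prec a c)
    {f : MvPolynomial σ R} (hf : f ≠ 0) : ∃ m, IsLeadingMonomial prec f m :=
  let ⟨m, hm, hmax⟩ := Finset.exists_forall_eq_or_rel htot htrans (support_nonempty.2 hf)
  ⟨m, hm, hmax⟩

theorem IsLeadingMonomial.unique [CommSemiring R]
    (htrans : ∀ a b c, prec a b → prec b c → prec a c) (hirr : ∀ a, ¬ prec a a)
    {f : MvPolynomial σ R} {m m' : σ →₀ ℕ}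
    (h : IsLeadingMonomial prec f m) (h' : IsLeadingMonomial prec f m') : m = m' := by
  rcases h.2 m' h'.1 with he | hp
  · exact he.symm
  rcases h'.2 m h.1 with he | hp'
  · exact he
  exact absurd (htrans _ _ _ hp hp') (hirr _)

theorem isLeadingMonomial_C_mul_iff [CommRing R] [IsDomain R] {d : R} (hd : d ≠ 0)
    {p : MvPolynomial σ R} {m : σ →₀ ℕ} :
    IsLeadingMonomial prec (C d * p) m ↔ IsLeadingMonomial prec p m := by
  simp only [IsLeadingMonomial, C_mul', support_smul_eq hd]

theorem IsLeadingMonomial.prec_of_mem_support_reduce [CommRing R]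
    (hadd : ∀ a b c, prec a b → prec (c + a) (c + b)) {p q : MvPolynomial σ R} {m n : σ →₀ ℕ}
    (hp : IsLeadingMonomial prec p m) (hq : IsLeadingMonomial prec q n) (hnm : n ≤ m) :
    ∀ m' ∈ (C (q.coeff n) * p - monomial (m - n) (p.coeff m) * q).support, prec m' m := by
  intro m' hm'
  have hm'm : m' ≠ m := by
    rintro rfl
    rw [mem_support_iff, coeff_sub, coeff_C_mul, coeff_monomial_mul', if_pos tsub_le_self,
      tsub_tsub_cancel_of_le hnm, mul_comm, sub_self] at hm'
    exact hm' rfl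
  rw [mem_support_iff, coeff_sub] at hm'
  obtain hpm | hqm : coeff m' (C (q.coeff n) * p) ≠ 0 ∨
      coeff m' (monomial (m - n) (p.coeff m) * q) ≠ 0 :=
    not_and_or.1 fun ⟨h₁, h₂⟩ => hm' (by rw [h₁, h₂, sub_zero])
  · rw [coeff_C_mul] at hpm
    exact (hp.2 m' (mem_support_iff.2 (right_ne_zero_of_mul hpm))).resolve_left hm'm
  · rw [coeff_monomial_mul'] at hqm
    split_ifs at hqm with hle
    · rcases hq.2 _ (mem_support_iff.2 (right_ne_zero_of_mul hqm)) with he | hlt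
      · exact absurd (by rw [← add_tsub_cancel_of_le hle, he, tsub_add_cancel_of_le hnm]) hm'm
      · simpa only [add_tsub_cancel_of_le hle, tsub_add_cancel_of_le hnm] using hadd _ _ (m - n) hlt
    · exact absurd rfl hqm

theorem IsMonomialOrder.wellFounded [Finite σ] (h : IsMonomialOrder prec) : WellFounded prec := by
  obtain ⟨-, htrans, hirr, hle, -⟩ := h
  have : IsTrans _ (flip prec) := ⟨fun a b c hab hbc => htrans _ _ _ hbc hab⟩
  refine wellFounded_iff_isEmpty_descending_chain.2 ⟨fun ⟨f, hf⟩ => ?_⟩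
  obtain ⟨i, j, hij, hfij⟩ := wellQuasiOrdered_le f
  have hji : prec (f j) (f i) := Nat.rel_of_forall_rel_succ_of_lt (flip prec) hf hij
  rcases eq_or_ne (f i) (f j) with he | hne
  · exact hirr _ (he ▸ hji)
  · exact hirr _ (htrans _ _ _ (hle _ _ hfij hne) hji)

end LeadingMonomial

section BlockOrder

variable {σ τ : Type*} {prec1 : (σ →₀ ℕ) → (σ →₀ ℕ) → Prop} {prec2 : (τ →₀ ℕ) → (τ →₀ ℕ) → Prop}

theorem blockOrder_total (htot1 : ∀ a b, a = b ∨ prec1 a b ∨ prec1 b a)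
    (htot2 : ∀ a b, a = b ∨ prec2 a b ∨ prec2 b a) (a b : (σ ⊕ τ) →₀ ℕ) :
    a = b ∨ blockOrder prec1 prec2 a b ∨ blockOrder prec1 prec2 b a := by
  set e := Finsupp.sumFinsuppAddEquivProdFinsupp (α := σ) (β := τ) (M := ℕ)
  rcases htot1 (e a).1 (e b).1 with he1 | hp | hp
  · rcases htot2 (e a).2 (e b).2 with he2 | hq | hq
    · exact .inl (e.injective (Prod.ext he1 he2))
    · exact .inr (.inl (.inr ⟨he1, hq⟩))
    · exact .inr (.inr (.inr ⟨he1.symm, hq⟩))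
  · exact .inr (.inl (.inl hp))
  · exact .inr (.inr (.inl hp))

theorem blockOrder_trans (htrans1 : ∀ a b c, prec1 a b → prec1 b c → prec1 a c)
    (htrans2 : ∀ a b c, prec2 a b → prec2 b c → prec2 a c) (a b c : (σ ⊕ τ) →₀ ℕ) :
    blockOrder prec1 prec2 a b → blockOrder prec1 prec2 b c → blockOrder prec1 prec2 a c := by
  rintro (hab | ⟨eab, hab⟩) (hbc | ⟨ebc, hbc⟩)
  · exact .inl (htrans1 _ _ _ hab hbc)
  · exact .inl (ebc ▸ hab)
  · exact .inl (eab ▸ hbc)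
  · exact .inr ⟨eab.trans ebc, htrans2 _ _ _ hab hbc⟩

end BlockOrder

section SumAlgEquiv

variable {K : Type*} [Field K] {σ τ : Type*}

theorem coeff_coeff_sumAlgEquiv (q : MvPolynomial (σ ⊕ τ) K) (m₁ : σ →₀ ℕ) (m₂ : τ →₀ ℕ) :
    coeff m₂ (coeff m₁ (sumAlgEquiv K σ τ q)) =
      coeff (Finsupp.sumFinsuppAddEquivProdFinsupp.symm (m₁, m₂)) q := by
  simp [sumAlgEquiv, coeff, AddMonoidAlgebra.domCongr, AddMonoidAlgebra.curryAlgEquiv,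
    AddMonoidAlgebra.curryRingEquiv, AddMonoidAlgebra.curryAddEquiv,
    AddMonoidAlgebra.coeffAddEquiv]

theorem mem_support_sumAlgEquiv {q : MvPolynomial (σ ⊕ τ) K} {m₁ : σ →₀ ℕ} :
    m₁ ∈ (sumAlgEquiv K σ τ q).support ↔
      ∃ m₂, Finsupp.sumFinsuppAddEquivProdFinsupp.symm (m₁, m₂) ∈ q.support := by
  simp only [mem_support_iff, MvPolynomial.ne_zero_iff, coeff_coeff_sumAlgEquiv]

theorem fst_sumFinsuppAddEquivProdFinsupp_mono {a b : (σ ⊕ τ) →₀ ℕ} (h : a ≤ b) :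
    (Finsupp.sumFinsuppAddEquivProdFinsupp a).1 ≤ (Finsupp.sumFinsuppAddEquivProdFinsupp b).1 :=
  fun i => by simpa [Finsupp.fst_sumFinsuppAddEquivProdFinsupp] using h (Sum.inl i)

theorem IsLeadingMonomial.sumAlgEquiv {prec1 : (σ →₀ ℕ) → (σ →₀ ℕ) → Prop}
    {prec2 : (τ →₀ ℕ) → (τ →₀ ℕ) → Prop} {q : MvPolynomial (σ ⊕ τ) K} {M : (σ ⊕ τ) →₀ ℕ}
    (hM : IsLeadingMonomial (blockOrder prec1 prec2) q M) :
    IsLeadingMonomial prec1 (sumAlgEquiv K σ τ q) (Finsupp.sumFinsuppAddEquivProdFinsupp M).1 := by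
  refine ⟨mem_support_sumAlgEquiv.2 ⟨(Finsupp.sumFinsuppAddEquivProdFinsupp M).2, ?_⟩,
    fun m₁ hm₁ => ?_⟩
  · rw [Prod.mk.eta, AddEquiv.symm_apply_apply]
    exact hM.1
  obtain ⟨m₂, hm₂⟩ := mem_support_sumAlgEquiv.1 hm₁
  rcases hM.2 _ hm₂ with he | hp | ⟨he, -⟩
  · exact .inl (by rw [← he, AddEquiv.apply_symm_apply])
  · exact .inr (by simpa using hp)
  · exact .inl (by simpa using he)

theorem sumAlgEquiv_rename_inr (q : MvPolynomial τ K) :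
    sumAlgEquiv K σ τ (rename Sum.inr q) = C q := by
  simpa using DFunLike.congr_fun (sumAlgEquiv_comp_rename_inr K σ τ) q

end SumAlgEquiv

theorem le_satIdeal {R : Type*} [CommRing R] (I : Ideal R) (h : R) : I ≤ satIdeal I h :=
  fun f hf => ⟨0, by simpa using hf⟩

theorem mem_satIdeal_of_mul_mem {R : Type*} [CommRing R] {I : Ideal R} {h f : R}
    (hf : h * f ∈ satIdeal I h) : f ∈ satIdeal I h :=
  let ⟨k, hk⟩ := hf
  ⟨k + 1, by rwa [pow_succ, mul_assoc]⟩

theorem ne_zero_of_forall_dvd_imp_dvd {M : Type*} [CommMonoidWithZero M] [NoZeroDivisors M]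
    [Nontrivial M] {S : Set M} (hS : S.Finite) (h0 : 0 ∉ S) {h : M}
    (hlcm : ∀ h', (∀ c ∈ S, c ∣ h') → h ∣ h') : h ≠ 0 := by
  classical
  rintro rfl
  refine Finset.prod_ne_zero_iff.2 (fun c hc => ?_) (zero_dvd_iff.1 (hlcm (∏ c ∈ hS.toFinset, c)
    fun c hc => Finset.dvd_prod_of_mem _ (hS.mem_toFinset.2 hc)))
  exact ne_of_mem_of_not_mem (hS.mem_toFinset.1 hc) h0

section Elimination

variable {K : Type*} [Field K] {σ τ : Type*}
variable {prec1 : (σ →₀ ℕ) → (σ →₀ ℕ) → Prop} {prec2 : (τ →₀ ℕ) → (τ →₀ ℕ) → Prop}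

theorem IsLeadingCoeff.ne_zero {g : MvPolynomial (σ ⊕ τ) K} {c : MvPolynomial τ K}
    (hc : IsLeadingCoeff prec1 g c) : c ≠ 0 := by
  obtain ⟨m, hm, rfl⟩ := hc
  exact mem_support_iff.1 hm.1

theorem isLeadingCoeff_subsingleton (htrans : ∀ a b c, prec1 a b → prec1 b c → prec1 a c)
    (hirr : ∀ a, ¬ prec1 a a) (g : MvPolynomial (σ ⊕ τ) K) :
    {c | IsLeadingCoeff prec1 g c}.Subsingleton := by
  rintro _ ⟨m, hm, rfl⟩ _ ⟨m', hm', rfl⟩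
  rw [hm.unique htrans hirr hm']

theorem mem_comap_map_toFracPoly_iff (I : Ideal (MvPolynomial (σ ⊕ τ) K))
    (f : MvPolynomial (σ ⊕ τ) K) :
    f ∈ Ideal.comap (toFracPoly K σ τ) (Ideal.map (toFracPoly K σ τ) I) ↔
      ∃ d : MvPolynomial τ K, d ≠ 0 ∧ rename Sum.inr d * f ∈ I := by
  let := algebraMvPolynomial (σ := σ) (R := MvPolynomial τ K)
    (S := FractionRing (MvPolynomial τ K))
  have hcomp : toFracPoly K σ τ =
      (algebraMap _ (MvPolynomial σ (FractionRing (MvPolynomial τ K)))).comp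
        (sumAlgEquiv K σ τ).toRingEquiv.toRingHom := rfl
  have hmem (x) : sumAlgEquiv K σ τ x ∈ I.map (sumAlgEquiv K σ τ : _ →+* _) ↔ x ∈ I :=
    Ideal.apply_mem_of_equiv_iff (f := (sumAlgEquiv K σ τ).toRingEquiv)
  rw [Ideal.mem_comap, hcomp, ← Ideal.map_map, RingHom.comp_apply,
    IsLocalization.algebraMap_mem_map_algebraMap_iff
      ((nonZeroDivisors (MvPolynomial τ K)).map (C (σ := σ)))]
  simp [Submonoid.mem_map, ← sumAlgEquiv_rename_inr, ← map_mul, hmem]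

theorem satIdeal_le_comap_map_toFracPoly (I : Ideal (MvPolynomial (σ ⊕ τ) K))
    {h : MvPolynomial τ K} (hh : h ≠ 0) :
    satIdeal I (rename Sum.inr h) ≤
      Ideal.comap (toFracPoly K σ τ) (Ideal.map (toFracPoly K σ τ) I) := by
  rintro f ⟨k, hk⟩
  exact (mem_comap_map_toFracPoly_iff I f).2 ⟨h ^ k, pow_ne_zero k hh, by rwa [map_pow]⟩

theorem IsGroebnerBasis.exists_isLeadingMonomial_sumAlgEquiv_le
    (h1 : IsMonomialOrder prec1) (h2 : IsMonomialOrder prec2)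
    {I : Ideal (MvPolynomial (σ ⊕ τ) K)} {H : Set (MvPolynomial (σ ⊕ τ) K)}
    (hH : IsGroebnerBasis (blockOrder prec1 prec2) H I) {f : MvPolynomial (σ ⊕ τ) K}
    (hf : f ∈ Ideal.comap (toFracPoly K σ τ) (Ideal.map (toFracPoly K σ τ) I))
    {m : σ →₀ ℕ} (hm : IsLeadingMonomial prec1 (sumAlgEquiv K σ τ f) m) :
    ∃ g ∈ H, ∃ mg, IsLeadingMonomial prec1 (sumAlgEquiv K σ τ g) mg ∧ mg ≤ m := by
  obtain ⟨d, hd, hdf⟩ := (mem_comap_map_toFracPoly_iff I f).1 hf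
  have hdf0 : rename Sum.inr d * f ≠ 0 := by
    refine mul_ne_zero ?_ ?_
    · exact (map_ne_zero_iff _ (rename_injective _ Sum.inr_injective)).2 hd
    · rintro rfl
      simp [IsLeadingMonomial] at hm
  obtain ⟨M, hM⟩ := exists_isLeadingMonomial (blockOrder_total h1.1 h2.1)
    (blockOrder_trans h1.2.1 h2.2.1) hdf0
  obtain ⟨g, hg, Mg, hMg, hle⟩ := hH.2.2 _ hdf hdf0 M hM
  have hfM := hM.sumAlgEquiv
  rw [map_mul, sumAlgEquiv_rename_inr, isLeadingMonomial_C_mul_iff hd] at hfM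
  rw [← hfM.unique h1.2.1 h1.2.2.1 hm]
  exact ⟨g, hg, _, hMg.sumAlgEquiv, fst_sumFinsuppAddEquivProdFinsupp_mono hle⟩

theorem comap_map_toFracPoly_le_satIdeal [Finite σ]
    (h1 : IsMonomialOrder prec1) (h2 : IsMonomialOrder prec2)
    {I : Ideal (MvPolynomial (σ ⊕ τ) K)} {H : Set (MvPolynomial (σ ⊕ τ) K)}
    (hH : IsGroebnerBasis (blockOrder prec1 prec2) H I) {h : MvPolynomial τ K}
    (hdvd : ∀ g ∈ H, ∀ c, IsLeadingCoeff prec1 g c → c ∣ h) :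
    Ideal.comap (toFracPoly K σ τ) (Ideal.map (toFracPoly K σ τ) I) ≤
      satIdeal I (rename Sum.inr h) := by
  set J := Ideal.comap (toFracPoly K σ τ) (Ideal.map (toFracPoly K σ τ) I)
  have hHI : H ⊆ I := hH.2.1
  have hIJ : I ≤ J := Ideal.le_comap_map
  have hlm (f : MvPolynomial (σ ⊕ τ) K) (hf : f ≠ 0) :
      ∃ m, IsLeadingMonomial prec1 (sumAlgEquiv K σ τ f) m :=
    exists_isLeadingMonomial h1.1 h1.2.1 (by simpa using hf)
  suffices key : ∀ m, ∀ f ∈ J, IsLeadingMonomial prec1 (sumAlgEquiv K σ τ f) m →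
      f ∈ satIdeal I (rename Sum.inr h) by
    intro f hf
    by_cases hf0 : f = 0
    · rw [hf0]; exact zero_mem _
    obtain ⟨m, hm⟩ := hlm f hf0
    exact key m f hf hm
  intro m
  induction m using h1.wellFounded.induction with
  | _ m ih =>
    intro f hf hm
    obtain ⟨g, hg, mg, hgm, hle⟩ := hH.exists_isLeadingMonomial_sumAlgEquiv_le h1 h2 hf hm
    obtain ⟨c', hc'⟩ := hdvd g hg _ ⟨mg, hgm, rfl⟩
    set t := (sumAlgEquiv K σ τ).symm (monomial (m - mg) ((sumAlgEquiv K σ τ f).coeff m))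
    set f₁ := rename Sum.inr ((sumAlgEquiv K σ τ g).coeff mg) * f - t * g
    have hf₁J : f₁ ∈ J := J.sub_mem (J.mul_mem_left _ hf) (J.mul_mem_left _ (hIJ (hHI hg)))
    have hf₁ : f₁ ∈ satIdeal I (rename Sum.inr h) := by
      by_cases hf₁0 : f₁ = 0
      · rw [hf₁0]; exact zero_mem _
      obtain ⟨m₁, hm₁⟩ := hlm f₁ hf₁0
      have hf₁_eq : sumAlgEquiv K σ τ f₁ =
          C ((sumAlgEquiv K σ τ g).coeff mg) * sumAlgEquiv K σ τ f -
          monomial (m - mg) ((sumAlgEquiv K σ τ f).coeff m) * sumAlgEquiv K σ τ g := by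
        simp [f₁, t, sumAlgEquiv_rename_inr]
      refine ih m₁ ?_ f₁ hf₁J hm₁
      exact hm.prec_of_mem_support_reduce h1.2.2.2.2 hgm hle m₁ (hf₁_eq ▸ hm₁.1)
    refine mem_satIdeal_of_mul_mem ?_
    have hsplit : rename Sum.inr h * f = rename Sum.inr c' * (f₁ + t * g) := by
      rw [hc', map_mul]; ring
    rw [hsplit]
    exact Ideal.mul_mem_left _ _
      (Ideal.add_mem _ hf₁ (Ideal.mul_mem_left _ _ (le_satIdeal _ _ (hHI hg))))

end Elimination

theorem extension_contraction_eq_saturation_general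
    {K : Type*} [Field K] {σ τ : Type*} [Finite σ]
    (prec1 : (σ →₀ ℕ) → (σ →₀ ℕ) → Prop) (prec2 : (τ →₀ ℕ) → (τ →₀ ℕ) → Prop)
    (h1 : IsMonomialOrder prec1) (h2 : IsMonomialOrder prec2)
    (I : Ideal (MvPolynomial (σ ⊕ τ) K)) (H : Set (MvPolynomial (σ ⊕ τ) K))
    (hH : IsMinimalGroebnerBasis (blockOrder prec1 prec2) H I)
    (h : MvPolynomial τ K)
    -- `h` is a least common multiple of the leading coefficients of the elements of `H`
    (hdvd : ∀ g ∈ H, ∀ c, IsLeadingCoeff prec1 g c → c ∣ h)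
    (hlcm : ∀ h' : MvPolynomial τ K,
      (∀ g ∈ H, ∀ c, IsLeadingCoeff prec1 g c → c ∣ h') → h ∣ h') :
    Ideal.comap (toFracPoly K σ τ) (Ideal.map (toFracPoly K σ τ) I) =
      satIdeal I (rename (Sum.inr : τ → σ ⊕ τ) h) := by
  have hh : h ≠ 0 := by
    refine ne_zero_of_forall_dvd_imp_dvd (S := ⋃ g ∈ H, {c | IsLeadingCoeff prec1 g c}) ?_ ?_
      fun h' hh' => hlcm h' fun g hg c hc => hh' c (Set.mem_biUnion hg hc)
    · exact hH.1.1.biUnion fun g _ => (isLeadingCoeff_subsingleton h1.2.1 h1.2.2.1 g).finite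
    · simp only [Set.mem_iUnion]
      rintro ⟨g, -, hc⟩
      exact hc.ne_zero rfl
  exact le_antisymm (comap_map_toFracPoly_le_satIdeal h1 h2 hH.1 hdvd)
    (satIdeal_le_comap_map_toFracPoly I hh)

/-- Let `H` be a minimal Gröbner basis of `I ⊆ K[x,y]` with respect to a
block order eliminating `x`, and let `h ∈ K[y]` be the least common multiple of the leading
coefficients of the elements of `H` viewed in `K(y)[x]`.  Then
`I·K(y)[x] ∩ K[x,y] = (I : h^∞)`. -/
theorem extension_contraction_eq_saturation
    {K : Type*} [Field K] {σ τ : Type*} [Finite σ] [Finite τ]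
    (prec1 : (σ →₀ ℕ) → (σ →₀ ℕ) → Prop) (prec2 : (τ →₀ ℕ) → (τ →₀ ℕ) → Prop)
    (h1 : IsMonomialOrder prec1) (h2 : IsMonomialOrder prec2)
    (I : Ideal (MvPolynomial (σ ⊕ τ) K)) (H : Set (MvPolynomial (σ ⊕ τ) K))
    (hH : IsMinimalGroebnerBasis (blockOrder prec1 prec2) H I)
    (h : MvPolynomial τ K)
    -- `h` is a least common multiple of the leading coefficients of the elements of `H`
    (hdvd : ∀ g ∈ H, ∀ c, IsLeadingCoeff prec1 g c → c ∣ h)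
    (hlcm : ∀ h' : MvPolynomial τ K,
      (∀ g ∈ H, ∀ c, IsLeadingCoeff prec1 g c → c ∣ h') → h ∣ h') :
    Ideal.comap (toFracPoly K σ τ) (Ideal.map (toFracPoly K σ τ) I) =
      satIdeal I (rename (Sum.inr : τ → σ ⊕ τ) h) :=
  extension_contraction_eq_saturation_general prec1 prec2 h1 h2 I H hH h hdvd hlcm
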